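/- Let A_1, A_2 > 0 and take (d_1,d_2) = (3,6), n = 9. On ℝ²×ℝ² define v(q) := e^{(3q_1 + 6q_2)/2}, J(p) := (1/8)(p_1+p_2)² − p_1²/3 − p_2²/6, S(q) := A_1 e^{−q_1} + A_2 e^{−q_2}, the Ricci-flat Hamiltonian H(q,p) := v(q)^{-1}J(p) − S(q)v(q), and F(q,p) := −(1/24)(p_1 − p_2)² e^{−q_1 − 5q_2} + A_1 e^{q_1 + q_2}. Then F is a generalized first integral of H: there exists a smooth function φ on ℝ²×ℝ² such that {F,H} = φ·H identically; in particular {F,H}(q,p) = 0 at every point (q,p) with H(q,p) = 0. -/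

import Mathlib

/-- Partial derivative in the `i`-th `q`-coordinate. -/
noncomputable def pderivQ (F : (Fin 2 → ℝ) → (Fin 2 → ℝ) → ℝ) (i : Fin 2)
    (q p : Fin 2 → ℝ) : ℝ :=
  deriv (fun t => F (Function.update q i t) p) (q i)

/-- Partial derivative in the `i`-th `p`-coordinate. -/
noncomputable def pderivP (F : (Fin 2 → ℝ) → (Fin 2 → ℝ) → ℝ) (i : Fin 2)
    (q p : Fin 2 → ℝ) : ℝ :=
  deriv (fun t => F q (Function.update p i t)) (p i)

/-- Canonical Poisson bracket on `ℝ² × ℝ²`. -/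
noncomputable def poisson (F G : (Fin 2 → ℝ) → (Fin 2 → ℝ) → ℝ) (q p : Fin 2 → ℝ) : ℝ :=
  ∑ i : Fin 2, (pderivQ F i q p * pderivP G i q p - pderivP F i q p * pderivQ G i q p)

/-- The Ricci-flat Hamiltonian for `(d₁,d₂) = (3,6)`, `n = 9`:
`v(q) = e^{(3q₁+6q₂)/2}`, `J(p) = (p₁+p₂)²/8 − p₁²/3 − p₂²/6`,
`S(q) = A₁e^{−q₁} + A₂e^{−q₂}`, `H = v⁻¹J − Sv`. -/
noncomputable def Ham (A1 A2 : ℝ) (q p : Fin 2 → ℝ) : ℝ :=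
  (Real.exp ((3 * q 0 + 6 * q 1) / 2))⁻¹ *
      ((1 / 8) * (p 0 + p 1) ^ 2 - (p 0) ^ 2 / 3 - (p 1) ^ 2 / 6) -
    (A1 * Real.exp (-(q 0)) + A2 * Real.exp (-(q 1))) * Real.exp ((3 * q 0 + 6 * q 1) / 2)

/-- The Dancer–Wang generalized first integral for `(d₁,d₂) = (3,6)`. -/
noncomputable def Fint (A1 : ℝ) (q p : Fin 2 → ℝ) : ℝ :=
  -(1 / 24) * (p 0 - p 1) ^ 2 * Real.exp (-(q 0) - 5 * q 1) +
    A1 * Real.exp (q 0 + q 1)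
/-! The bracket is computed directly from the explicit partial derivatives. It factors as
`{F,H} = φ·H` with `φ = −(p₁ − p₂)e^{−q₁−5q₂}/24`: the kinetic and `A₂`-terms of `{F,H}` match
those of `φ·H` term by term, and the remaining `A₁`-terms cancel because
`e^{−q₁−5q₂} · v · e^{−q₁} = v⁻¹ · e^{q₁+q₂}`. -/

open Real

noncomputable def vol (q : Fin 2 → ℝ) : ℝ := exp ((3 * q 0 + 6 * q 1) / 2)

noncomputable def kinetic (p : Fin 2 → ℝ) : ℝ :=
  (1 / 8) * (p 0 + p 1) ^ 2 - p 0 ^ 2 / 3 - p 1 ^ 2 / 6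

noncomputable def potential (A1 A2 : ℝ) (q : Fin 2 → ℝ) : ℝ :=
  A1 * exp (-q 0) + A2 * exp (-q 1)

theorem Ham_eq (A1 A2 : ℝ) (q p : Fin 2 → ℝ) :
    Ham A1 A2 q p = (vol q)⁻¹ * kinetic p - potential A1 A2 q * vol q := rfl

noncomputable def bracketMultiplier (x : (Fin 2 → ℝ) × (Fin 2 → ℝ)) : ℝ :=
  -(x.2 0 - x.2 1) * exp (-x.1 0 - 5 * x.1 1) / 24

theorem contDiff_bracketMultiplier : ContDiff ℝ (⊤ : ℕ∞) bracketMultiplier := by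
  unfold bracketMultiplier
  fun_prop

section

variable (A1 A2 : ℝ) (q p : Fin 2 → ℝ)

theorem pderivQ_Fint_zero :
    pderivQ (Fint A1) 0 q p =
      (p 0 - p 1) ^ 2 * exp (-q 0 - 5 * q 1) / 24 + A1 * exp (q 0 + q 1) := by
  simp only [pderivQ, Fint, Function.update_apply, Fin.isValue, if_true, if_false, one_ne_zero]
  simp (disch := fun_prop) [_root_.deriv_exp]
  ring

theorem pderivQ_Fint_one :
    pderivQ (Fint A1) 1 q p =
      5 * (p 0 - p 1) ^ 2 * exp (-q 0 - 5 * q 1) / 24 + A1 * exp (q 0 + q 1) := by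
  simp only [pderivQ, Fint, Function.update_apply, Fin.isValue, if_true, if_false, zero_ne_one]
  simp (disch := fun_prop) [_root_.deriv_exp]
  ring

theorem pderivP_Fint_zero :
    pderivP (Fint A1) 0 q p = -(p 0 - p 1) * exp (-q 0 - 5 * q 1) / 12 := by
  simp only [pderivP, Fint, Function.update_apply, Fin.isValue, if_true, if_false, one_ne_zero]
  simp (disch := fun_prop)
  ring

theorem pderivP_Fint_one :
    pderivP (Fint A1) 1 q p = (p 0 - p 1) * exp (-q 0 - 5 * q 1) / 12 := by
  simp only [pderivP, Fint, Function.update_apply, Fin.isValue, if_true, if_false, zero_ne_one]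
  simp (disch := fun_prop)
  ring

theorem pderivQ_Ham_zero :
    pderivQ (Ham A1 A2) 0 q p =
      -(3 / 2) * ((vol q)⁻¹ * kinetic p + potential A1 A2 q * vol q) +
        A1 * exp (-q 0) * vol q := by
  simp only [pderivQ, Ham, vol, kinetic, potential, Function.update_apply, Fin.isValue, if_true,
    if_false, one_ne_zero, ← exp_neg]
  simp (disch := fun_prop) [_root_.deriv_exp]
  ring

theorem pderivQ_Ham_one :
    pderivQ (Ham A1 A2) 1 q p =
      -3 * ((vol q)⁻¹ * kinetic p + potential A1 A2 q * vol q) + A2 * exp (-q 1) * vol q := by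
  simp only [pderivQ, Ham, vol, kinetic, potential, Function.update_apply, Fin.isValue, if_true,
    if_false, zero_ne_one, ← exp_neg]
  simp (disch := fun_prop) [_root_.deriv_exp]
  ring

theorem pderivP_Ham_zero :
    pderivP (Ham A1 A2) 0 q p = (vol q)⁻¹ * ((p 0 + p 1) / 4 - 2 * p 0 / 3) := by
  simp only [pderivP, Ham, vol, Function.update_apply, Fin.isValue, if_true, if_false, one_ne_zero]
  simp (disch := fun_prop)
  ring

theorem pderivP_Ham_one :
    pderivP (Ham A1 A2) 1 q p = (vol q)⁻¹ * ((p 0 + p 1) / 4 - p 1 / 3) := by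
  simp only [pderivP, Ham, vol, Function.update_apply, Fin.isValue, if_true, if_false, zero_ne_one]
  simp (disch := fun_prop)
  ring

theorem poisson_Fint_Ham :
    poisson (Fint A1) (Ham A1 A2) q p = bracketMultiplier (q, p) * Ham A1 A2 q p := by
  have exp_identity :
      exp (-q 0 - 5 * q 1) * vol q * exp (-q 0) = (vol q)⁻¹ * exp (q 0 + q 1) := by
    simp only [vol, ← exp_neg, ← exp_add]
    congr 1
    ring
  simp only [poisson, Fin.sum_univ_two, pderivQ_Fint_zero, pderivQ_Fint_one, pderivP_Fint_zero,
    pderivP_Fint_one, pderivQ_Ham_zero, pderivQ_Ham_one, pderivP_Ham_zero, pderivP_Ham_one,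
    Ham_eq, bracketMultiplier, kinetic, potential]
  linear_combination (A1 * (p 0 - p 1) / 6) * exp_identity

end

theorem three_six_generalized_first_integral_general
    (A1 A2 : ℝ) :
    (∃ φ : ((Fin 2 → ℝ) × (Fin 2 → ℝ)) → ℝ, ContDiff ℝ (⊤ : ℕ∞) φ ∧
      ∀ q p : Fin 2 → ℝ,
        poisson (Fint A1) (Ham A1 A2) q p = φ (q, p) * Ham A1 A2 q p) ∧
    (∀ q p : Fin 2 → ℝ, Ham A1 A2 q p = 0 → poisson (Fint A1) (Ham A1 A2) q p = 0) := by
  refine ⟨⟨bracketMultiplier, contDiff_bracketMultiplier, poisson_Fint_Ham A1 A2⟩, ?_⟩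
  intro q p hHam
  rw [poisson_Fint_Ham, hHam, mul_zero]

/-- `F` is a generalized first integral of `H`: `{F,H} = φ·H` for a smooth `φ`;
in particular `{F,H}` vanishes on the zero set of `H`. -/
theorem three_six_generalized_first_integral
    (A1 A2 : ℝ) (hA1 : 0 < A1) (hA2 : 0 < A2) :
    (∃ φ : ((Fin 2 → ℝ) × (Fin 2 → ℝ)) → ℝ, ContDiff ℝ (⊤ : ℕ∞) φ ∧
      ∀ q p : Fin 2 → ℝ,
        poisson (Fint A1) (Ham A1 A2) q p = φ (q, p) * Ham A1 A2 q p) ∧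
    (∀ q p : Fin 2 → ℝ, Ham A1 A2 q p = 0 → poisson (Fint A1) (Ham A1 A2) q p = 0) :=
  three_six_generalized_first_integral_general A1 A2
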